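/- arXiv:1906.07028 — 2 statements merged into one kernel-verified Lean document; each statement's English description precedes it below -/
import Mathlib

section
/- Let u, v be convex functions on a convex set C ⊆ ℝⁿ with nonempty interior. If the set of points where both u and v are differentiable and ∇u = ∇v has full Lebesgue measure in C, then u - v is constant on the interior of C. -/
open MeasureTheory Set

section Aux

lemma aux_twopoint {S : Set ℝ} {f g : ℝ → ℝ} (hf : ConvexOn ℝ S f) (hg : ConvexOn ℝ S g)
    {s t ds dt : ℝ} (hs : s ∈ S) (ht : t ∈ S) (hst : s < t)
    (hfs : HasDerivAt f ds s) (hgs : HasDerivAt g ds s)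
    (hft : HasDerivAt f dt t) (hgt : HasDerivAt g dt t) :
    |(f t - g t) - (f s - g s)| ≤ (dt - ds) * (t - s) := by
  have h1 : ds ≤ slope f s t := hf.le_slope_of_hasDerivAt hs ht hst hfs
  have h2 : slope f s t ≤ dt := hf.slope_le_of_hasDerivAt hs ht hst hft
  have h3 : ds ≤ slope g s t := hg.le_slope_of_hasDerivAt hs ht hst hgs
  have h4 : slope g s t ≤ dt := hg.slope_le_of_hasDerivAt hs ht hst hgt
  have hts : (0:ℝ) < t - s := sub_pos.2 hst
  have e1 : (f t - g t) - (f s - g s) = (slope f s t - slope g s t) * (t - s) := by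
    rw [slope_def_field, slope_def_field]
    field_simp
    ring
  rw [e1, abs_mul, abs_of_pos hts]
  gcongr
  rw [abs_le]
  constructor <;> linarith

lemma aux_line {A B : ℝ} {f g : ℝ → ℝ} {φ : ℝ → ℝ} {D : Set ℝ}
    (hf : ConvexOn ℝ (Ioo A B) f) (hg : ConvexOn ℝ (Ioo A B) g)
    (hD : D ⊆ Ioo A B)
    (hD' : ∀ t ∈ D, HasDerivAt f (φ t) t ∧ HasDerivAt g (φ t) t)
    (hdense : ∀ α β, A ≤ α → β ≤ B → α < β → (D ∩ Ioo α β).Nonempty) :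
    ∀ s ∈ D, ∀ t ∈ D, f t - g t = f s - g s := by
  have hmono : ∀ s ∈ D, ∀ t ∈ D, s < t → φ s ≤ φ t := by
    intro s hs t ht hst
    have h1 : φ s ≤ slope f s t :=
      hf.le_slope_of_hasDerivAt (hD hs) (hD ht) hst (hD' s hs).1
    have h2 : slope f s t ≤ φ t :=
      hf.slope_le_of_hasDerivAt (hD hs) (hD ht) hst (hD' t ht).1
    linarith
  have key : ∀ δ > (0:ℝ), ∀ n : ℕ, ∀ s ∈ D, ∀ t ∈ D, s ≤ t → t - s < n * δ →
      |(f t - g t) - (f s - g s)| ≤ δ * (φ t - φ s) := by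
    intro δ hδ n
    induction n with
    | zero => intro s hs t ht hst habs; simp at habs; linarith
    | succ n ih =>
      intro s hs t ht hst hlt
      rcases eq_or_lt_of_le hst with rfl | hst'
      · simp
      by_cases hsmall : t - s ≤ δ
      · have h2p := aux_twopoint hf hg (hD hs) (hD ht) hst'
          (hD' s hs).1 (hD' s hs).2 (hD' t ht).1 (hD' t ht).2
        have hφ : 0 ≤ φ t - φ s := by
          have := hmono s hs t ht hst'; linarith
        calc |(f t - g t) - (f s - g s)| ≤ (φ t - φ s) * (t - s) := h2p
          _ ≤ (φ t - φ s) * δ := by gcongr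
          _ = δ * (φ t - φ s) := by ring
      · push_neg at hsmall
        have hn1 : 1 ≤ n := by
          by_contra h
          push_neg at h
          interval_cases n
          push_cast at hlt
          linarith
        have hnδ : δ ≤ (n:ℝ) * δ := by
          nth_rewrite 1 [← one_mul δ]
          gcongr
          exact_mod_cast hn1
        have hlt' : t - s < (n:ℝ) * δ + δ := by
          push_cast at hlt; linarith
        have hαβ : max s (t - δ) < min t (s + (n:ℝ) * δ) := by
          rw [max_lt_iff, lt_min_iff, lt_min_iff]
          refine ⟨⟨hst', by linarith⟩, ⟨by linarith, by linarith⟩⟩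
        have hα : A ≤ max s (t - δ) := le_trans (hD hs).1.le (le_max_left _ _)
        have hβ : min t (s + (n:ℝ) * δ) ≤ B := le_trans (min_le_left _ _) (hD ht).2.le
        obtain ⟨m, hmD, hm⟩ := hdense _ _ hα hβ hαβ
        have hsm : s < m := lt_of_le_of_lt (le_max_left _ _) hm.1
        have hmt : m < t := lt_of_lt_of_le hm.2 (min_le_left _ _)
        have h1 : |(f m - g m) - (f s - g s)| ≤ δ * (φ m - φ s) := by
          refine ih s hs m hmD hsm.le ?_
          have := hm.2.trans_le (min_le_right _ _)
          linarith
        have h2 : |(f t - g t) - (f m - g m)| ≤ δ * (φ t - φ m) := by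
          refine ih m hmD t ht hmt.le ?_
          have := (le_max_right s (t - δ)).trans_lt hm.1
          linarith
        calc |(f t - g t) - (f s - g s)|
            ≤ |(f t - g t) - (f m - g m)| + |(f m - g m) - (f s - g s)| := abs_sub_le _ _ _
          _ ≤ δ * (φ t - φ m) + δ * (φ m - φ s) := add_le_add h2 h1
          _ = δ * (φ t - φ s) := by ring
  -- conclude equality
  have main : ∀ s ∈ D, ∀ t ∈ D, s ≤ t → f t - g t = f s - g s := by
    intro s hs t ht hst
    rcases eq_or_lt_of_le hst with rfl | hst'
    · rfl
    have hK : 0 ≤ φ t - φ s := by have := hmono s hs t ht hst'; linarith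
    set K := φ t - φ s with hKdef
    have hsmall : ∀ ε > (0:ℝ), |(f t - g t) - (f s - g s)| < ε := by
      intro ε hε
      have hδ : (0:ℝ) < ε / (K + 1) := by positivity
      obtain ⟨N, hN⟩ := exists_nat_gt ((t - s) / (ε / (K + 1)))
      have hNδ : t - s < N * (ε / (K + 1)) := by
        rw [div_lt_iff₀ hδ] at hN
        linarith
      have := key _ hδ N s hs t ht hst hNδ
      calc |(f t - g t) - (f s - g s)| ≤ ε / (K + 1) * K := this
        _ < ε := by
          rw [div_mul_eq_mul_div, div_lt_iff₀ (by linarith)]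
          nlinarith
    by_contra hne
    have h0 : 0 < |(f t - g t) - (f s - g s)| := by
      rw [abs_pos]
      intro h
      exact hne (by linarith [sub_eq_zero.mp h])
    exact absurd (hsmall _ h0) (lt_irrefl _)
  intro s hs t ht
  rcases le_total s t with h | h
  · exact main s hs t ht h
  · exact (main t ht s hs h).symm

lemma aux_fubini {n : ℕ} {N : Set (EuclideanSpace ℝ (Fin n))} (hN : volume N = 0)
    (x e : EuclideanSpace ℝ (Fin n)) :
    ∀ᵐ z : EuclideanSpace ℝ (Fin n), ∀ᵐ t : ℝ, x + z + t • e ∉ N := by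
  obtain ⟨N', hNN', hN'meas, hN'0⟩ := exists_measurable_superset_of_null hN
  set Q : Set (EuclideanSpace ℝ (Fin n) × ℝ) := (fun p => x + p.1 + p.2 • e) ⁻¹' N' with hQdef
  have hφ : Measurable fun p : EuclideanSpace ℝ (Fin n) × ℝ => x + p.1 + p.2 • e :=
    (measurable_fst.const_add x).add (measurable_snd.smul_const e)
  have hQ : MeasurableSet Q := hφ hN'meas
  have hzero : (volume.prod volume) Q = 0 := by
    rw [Measure.prod_apply_symm hQ]
    have hsec : ∀ t : ℝ, volume ((fun z => (z, t)) ⁻¹' Q) = 0 := by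
      intro t
      have heq : ((fun z : EuclideanSpace ℝ (Fin n) => (z, t)) ⁻¹' Q)
          = (fun z => (x + t • e) + z) ⁻¹' N' := by
        have hcomm : ∀ z : EuclideanSpace ℝ (Fin n), x + z + t • e = (x + t • e) + z := by
          intro z; abel
        ext z
        simp only [hQdef, mem_preimage, hcomm z]
      rw [heq, measure_preimage_add]
      exact hN'0
    simp [hsec]
  have hae := (Measure.measure_prod_null hQ).mp hzero
  filter_upwards [hae] with z hz
  rw [ae_iff]
  refine measure_mono_null ?_ hz
  intro t ht
  simp only [Set.mem_setOf_eq, not_not] at ht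
  exact hNN' ht

end Aux

set_option maxHeartbeats 1000000 in
/-- If two convex functions on a convex set `C` with nonempty interior are differentiable
with equal gradients off a Lebesgue-null subset of `C`, they differ by a constant on
the interior of `C`. -/
theorem stmt7 {n : ℕ} (C : Set (EuclideanSpace ℝ (Fin n)))
    (hC : Convex ℝ C) (hCint : (interior C).Nonempty)
    (u v : EuclideanSpace ℝ (Fin n) → ℝ)
    (hu : ConvexOn ℝ C u) (hv : ConvexOn ℝ C v)
    (hfull : volume {x ∈ C | ¬ (DifferentiableAt ℝ u x ∧ DifferentiableAt ℝ v x ∧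
      fderiv ℝ u x = fderiv ℝ v x)} = 0) :
    ∃ c : ℝ, ∀ x ∈ interior C, u x - v x = c := by
  classical
  obtain ⟨x₀, hx₀⟩ := hCint
  refine ⟨u x₀ - v x₀, ?_⟩
  intro y hy
  set w : EuclideanSpace ℝ (Fin n) → ℝ := fun p => u p - v p with hwdef
  have hCo : Convex ℝ (interior C) := hC.interior
  have hu' : ConvexOn ℝ (interior C) u := hu.subset interior_subset hCo
  have hv' : ConvexOn ℝ (interior C) v := hv.subset interior_subset hCo
  have hwcont : ContinuousOn w (interior C) :=
    hu.continuousOn_interior.sub hv.continuousOn_interior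
  set e : EuclideanSpace ℝ (Fin n) := y - x₀ with hedef
  obtain ⟨r₀, hr₀, hball₀⟩ := Metric.isOpen_iff.mp isOpen_interior x₀ hx₀
  obtain ⟨r₁, hr₁, hball₁⟩ := Metric.isOpen_iff.mp isOpen_interior y hy
  suffices h : ∀ ε > (0:ℝ), |w y - w x₀| ≤ ε by
    by_contra hne
    have h0 : 0 < |w y - w x₀| := by
      rw [abs_pos]
      intro hz
      apply hne
      have := sub_eq_zero.mp hz
      simpa [hwdef] using this
    have := h (|w y - w x₀| / 2) (by positivity)
    linarith
  intro ε hε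
  -- continuity moduli
  obtain ⟨δ₀, hδ₀, hcont₀⟩ := Metric.continuousWithinAt_iff.mp (hwcont x₀ hx₀) (ε/2) (by positivity)
  obtain ⟨δ₁, hδ₁, hcont₁⟩ := Metric.continuousWithinAt_iff.mp (hwcont y hy) (ε/2) (by positivity)
  set ρ : ℝ := min (min r₀ r₁) (min δ₀ δ₁) / 2 with hρdef
  have hρ : 0 < ρ := by positivity
  have hρr₀ : ρ < r₀ := by
    have : min (min r₀ r₁) (min δ₀ δ₁) ≤ r₀ := le_trans (min_le_left _ _) (min_le_left _ _)
    simp only [hρdef]; linarith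
  have hρr₁ : ρ < r₁ := by
    have : min (min r₀ r₁) (min δ₀ δ₁) ≤ r₁ := le_trans (min_le_left _ _) (min_le_right _ _)
    simp only [hρdef]; linarith
  have h2ρδ₀ : 2 * ρ ≤ δ₀ := by
    have : min (min r₀ r₁) (min δ₀ δ₁) ≤ δ₀ := le_trans (min_le_right _ _) (min_le_left _ _)
    simp only [hρdef]; linarith
  have h2ρδ₁ : 2 * ρ ≤ δ₁ := by
    have : min (min r₀ r₁) (min δ₀ δ₁) ≤ δ₁ := le_trans (min_le_right _ _) (min_le_right _ _)
    simp only [hρdef]; linarith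
  -- choose a good small translation z
  have hae := aux_fubini hfull x₀ e
  have hGc : volume {z : EuclideanSpace ℝ (Fin n) |
      ¬ ∀ᵐ t : ℝ, x₀ + z + t • e ∉ {x ∈ C | ¬ (DifferentiableAt ℝ u x ∧ DifferentiableAt ℝ v x ∧
        fderiv ℝ u x = fderiv ℝ v x)}} = 0 := hae
  have hballpos : 0 < volume (Metric.ball (0 : EuclideanSpace ℝ (Fin n)) ρ) :=
    Metric.measure_ball_pos volume 0 hρ
  have hnon : ((Metric.ball (0 : EuclideanSpace ℝ (Fin n)) ρ) \ {z : EuclideanSpace ℝ (Fin n) |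
      ¬ ∀ᵐ t : ℝ, x₀ + z + t • e ∉ {x ∈ C | ¬ (DifferentiableAt ℝ u x ∧ DifferentiableAt ℝ v x ∧
        fderiv ℝ u x = fderiv ℝ v x)}}).Nonempty := by
    apply nonempty_of_measure_ne_zero (μ := volume)
    rw [measure_diff_null hGc]
    exact hballpos.ne'
  obtain ⟨z, hzball, hzgood⟩ := hnon
  simp only [mem_setOf_eq, not_not] at hzgood
  have hznorm : ‖z‖ < ρ := by simpa [Metric.mem_ball, dist_eq_norm] using hzball
  -- the perturbed segment
  set x' : EuclideanSpace ℝ (Fin n) := x₀ + z with hx'def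
  set y' : EuclideanSpace ℝ (Fin n) := y + z with hy'def
  have hee : y' - x' = e := by simp only [hx'def, hy'def, hedef]; abel
  have hx' : x' ∈ interior C := by
    apply hball₀
    simp only [Metric.mem_ball, hx'def, dist_eq_norm]
    calc ‖x₀ + z - x₀‖ = ‖z‖ := by congr 1; abel
      _ < r₀ := hznorm.trans hρr₀
  have hy' : y' ∈ interior C := by
    apply hball₁
    simp only [Metric.mem_ball, hy'def, dist_eq_norm]
    calc ‖y + z - y‖ = ‖z‖ := by congr 1; abel
      _ < r₁ := hznorm.trans hρr₁
  set p : ℝ → EuclideanSpace ℝ (Fin n) := fun t => x' + t • e with hpdef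
  have hpmem : ∀ t ∈ Icc (0:ℝ) 1, p t ∈ interior C := by
    intro t ht
    have := hCo.add_smul_sub_mem hx' hy' ht
    rwa [hee] at this
  -- convexity of the composed functions on Ioo 0 1
  set L : ℝ →ᵃ[ℝ] EuclideanSpace ℝ (Fin n) := AffineMap.lineMap x' y' with hLdef
  have hLp : ∀ t : ℝ, L t = p t := by
    intro t
    simp only [hLdef, hpdef, AffineMap.lineMap_apply_module]
    rw [← hee]
    module
  have hLmem : ∀ t ∈ Ioo (0:ℝ) 1, L t ∈ interior C := by
    intro t ht
    rw [hLp]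
    exact hpmem t (Ioo_subset_Icc_self ht)
  have hfconv : ConvexOn ℝ (Ioo (0:ℝ) 1) (fun t => u (p t)) := by
    have h1 : ConvexOn ℝ (L ⁻¹' interior C) (u ∘ L) := hu'.comp_affineMap L
    have h2 : ConvexOn ℝ (Ioo (0:ℝ) 1) (u ∘ L) := h1.subset hLmem (convex_Ioo _ _)
    have : (u ∘ L) = fun t => u (p t) := by funext t; simp [Function.comp, hLp t]
    rwa [this] at h2
  have hgconv : ConvexOn ℝ (Ioo (0:ℝ) 1) (fun t => v (p t)) := by
    have h1 : ConvexOn ℝ (L ⁻¹' interior C) (v ∘ L) := hv'.comp_affineMap L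
    have h2 : ConvexOn ℝ (Ioo (0:ℝ) 1) (v ∘ L) := h1.subset hLmem (convex_Ioo _ _)
    have : (v ∘ L) = fun t => v (p t) := by funext t; simp [Function.comp, hLp t]
    rwa [this] at h2
  -- the good set on the line
  set D : Set ℝ := {t ∈ Ioo (0:ℝ) 1 | p t ∉ {x ∈ C | ¬ (DifferentiableAt ℝ u x ∧
      DifferentiableAt ℝ v x ∧ fderiv ℝ u x = fderiv ℝ v x)}} with hDdef
  have hDsub : D ⊆ Ioo (0:ℝ) 1 := fun t ht => ht.1
  have hD' : ∀ t ∈ D, HasDerivAt (fun s => u (p s)) ((fderiv ℝ u (p t)) e) t ∧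
      HasDerivAt (fun s => v (p s)) ((fderiv ℝ u (p t)) e) t := by
    intro t ht
    have hptC : p t ∈ C := interior_subset (hpmem t (Ioo_subset_Icc_self ht.1))
    have hgood : DifferentiableAt ℝ u (p t) ∧ DifferentiableAt ℝ v (p t) ∧
        fderiv ℝ u (p t) = fderiv ℝ v (p t) := by
      by_contra hbad
      exact ht.2 ⟨hptC, hbad⟩
    have hp : HasDerivAt p e t := by
      have h1 : HasDerivAt (fun s : ℝ => s • e) ((1:ℝ) • e) t :=
        (hasDerivAt_id t).smul_const e
      rw [one_smul] at h1
      exact h1.const_add x'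
    constructor
    · exact hgood.1.hasFDerivAt.comp_hasDerivAt t hp
    · have := hgood.2.1.hasFDerivAt.comp_hasDerivAt t hp
      rwa [← hgood.2.2] at this
  have hdense : ∀ α β, (0:ℝ) ≤ α → β ≤ 1 → α < β → (D ∩ Ioo α β).Nonempty := by
    intro α β hα hβ hαβ
    by_contra hempty
    rw [Set.not_nonempty_iff_eq_empty] at hempty
    have hsub : Ioo α β ⊆ {t : ℝ | x₀ + z + t • e ∈ {x ∈ C | ¬ (DifferentiableAt ℝ u x ∧
        DifferentiableAt ℝ v x ∧ fderiv ℝ u x = fderiv ℝ v x)}} := by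
      intro t ht
      have ht01 : t ∈ Ioo (0:ℝ) 1 := ⟨lt_of_le_of_lt hα ht.1, lt_of_lt_of_le ht.2 hβ⟩
      have htD : t ∉ D := by
        intro hcon
        exact absurd (Set.mem_inter hcon ht) (by rw [hempty]; exact notMem_empty t)
      have : ¬ (p t ∉ _) := fun hc => htD ⟨ht01, hc⟩
      rw [not_not] at this
      simpa [hpdef, hx'def, add_assoc] using this
    have hnull : volume {t : ℝ | x₀ + z + t • e ∈ {x ∈ C | ¬ (DifferentiableAt ℝ u x ∧
        DifferentiableAt ℝ v x ∧ fderiv ℝ u x = fderiv ℝ v x)}} = 0 := by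
      have := hzgood
      rw [ae_iff] at this
      simpa [not_not] using this
    have : volume (Ioo α β) = 0 := measure_mono_null hsub hnull
    rw [Real.volume_Ioo] at this
    have : β - α ≤ 0 := by
      by_contra hc
      push_neg at hc
      simp [ENNReal.ofReal_eq_zero] at this
      linarith
    linarith
  have hconst := aux_line hfconv hgconv hDsub hD' hdense
  -- choose points near the endpoints
  have hm₀pos : 0 < min 1 (ρ / (‖e‖ + 1)) := by positivity
  obtain ⟨s, hsD, hs⟩ := hdense 0 (min 1 (ρ / (‖e‖ + 1))) le_rfl (min_le_left _ _) hm₀pos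
  have hm₁lt : max 0 (1 - ρ / (‖e‖ + 1)) < 1 := by
    have h1 : ρ / (‖e‖ + 1) > 0 := by positivity
    rw [max_lt_iff]
    constructor <;> linarith
  obtain ⟨t, htD, ht⟩ := hdense (max 0 (1 - ρ / (‖e‖ + 1))) 1 (le_max_left _ _) le_rfl hm₁lt
  -- distance estimates
  have hse : s * ‖e‖ < ρ := by
    have hs2 : s < ρ / (‖e‖ + 1) := lt_of_lt_of_le hs.2 (min_le_right _ _)
    have hs0 : 0 < s := hs.1
    have : s * ‖e‖ ≤ s * (‖e‖ + 1) :=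
      mul_le_mul_of_nonneg_left (by linarith [norm_nonneg e]) hs0.le
    have h2 : s * (‖e‖ + 1) < ρ := (lt_div_iff₀ (by positivity)).mp hs2
    linarith
  have hte : (1 - t) * ‖e‖ < ρ := by
    have ht2 : 1 - ρ / (‖e‖ + 1) < t := lt_of_le_of_lt (le_max_right _ _) ht.1
    have ht1 : t < 1 := ht.2
    have h1 : 1 - t < ρ / (‖e‖ + 1) := by linarith
    have : (1 - t) * ‖e‖ ≤ (1 - t) * (‖e‖ + 1) :=
      mul_le_mul_of_nonneg_left (by linarith [norm_nonneg e]) (by linarith)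
    have h2 : (1 - t) * (‖e‖ + 1) < ρ := (lt_div_iff₀ (by positivity)).mp h1
    linarith
  have hps : p s ∈ interior C := hpmem s (Ioo_subset_Icc_self hsD.1)
  have hpt : p t ∈ interior C := hpmem t (Ioo_subset_Icc_self htD.1)
  have hdist₀ : dist (p s) x₀ < δ₀ := by
    have : p s - x₀ = z + s • e := by simp only [hpdef, hx'def]; abel
    rw [dist_eq_norm, this]
    calc ‖z + s • e‖ ≤ ‖z‖ + ‖s • e‖ := norm_add_le _ _
      _ = ‖z‖ + |s| * ‖e‖ := by rw [norm_smul, Real.norm_eq_abs]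
      _ = ‖z‖ + s * ‖e‖ := by rw [abs_of_pos hsD.1.1]
      _ < ρ + ρ := by exact add_lt_add hznorm hse
      _ ≤ δ₀ := by linarith
  have hdist₁ : dist (p t) y < δ₁ := by
    have : p t - y = z + (t - 1) • e := by
      simp only [hpdef, hx'def, hedef, sub_smul, one_smul]
      abel
    rw [dist_eq_norm, this]
    calc ‖z + (t - 1) • e‖ ≤ ‖z‖ + ‖(t - 1) • e‖ := norm_add_le _ _
      _ = ‖z‖ + |t - 1| * ‖e‖ := by rw [norm_smul, Real.norm_eq_abs]
      _ = ‖z‖ + (1 - t) * ‖e‖ := by rw [abs_of_neg (by linarith [htD.1.2] : t - 1 < 0)]; ring_nf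
      _ < ρ + ρ := add_lt_add hznorm hte
      _ ≤ δ₁ := by linarith
  have hnear₀ : |w (p s) - w x₀| < ε / 2 := by
    have := hcont₀ hps hdist₀
    rwa [Real.dist_eq] at this
  have hnear₁ : |w (p t) - w y| < ε / 2 := by
    have := hcont₁ hpt hdist₁
    rwa [Real.dist_eq] at this
  have hmid : w (p t) = w (p s) := by
    have := hconst s hsD t htD
    simpa [hwdef] using this
  calc |w y - w x₀| = |(w y - w (p t)) + (w (p s) - w x₀)| := by rw [hmid]; ring_nf
    _ ≤ |w y - w (p t)| + |w (p s) - w x₀| := abs_add_le _ _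
    _ ≤ ε / 2 + ε / 2 := by
        rw [abs_sub_comm (w y)]
        exact add_le_add hnear₁.le hnear₀.le
    _ = ε := by ring
end

section
/- Let P ⊆ ℝⁿ be a compact convex set. If u : ℝⁿ → ℝ is convex and satisfies φ_P - C ≤ u ≤ φ_P + C for some constant C (where φ_P is the support function of P), then u is Lipschitz with Lipschitz constant sup_{p ∈ P} |p|. -/
open scoped RealInnerProductSpace

/-- The support function of a set `P`. -/
noncomputable def suppFn {n : ℕ} (P : Set (EuclideanSpace ℝ (Fin n)))
    (x : EuclideanSpace ℝ (Fin n)) : ℝ :=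
  sSup ((fun p => (⟪x, p⟫ : ℝ)) '' P)

/-- A convex function squeezed between `φ_P - C` and `φ_P + C` is Lipschitz with
constant `sup_{p ∈ P} |p|`. -/
theorem stmt12 {n : ℕ} (P : Set (EuclideanSpace ℝ (Fin n)))
    (hP : IsCompact P) (hPc : Convex ℝ P) (hne : P.Nonempty)
    (u : EuclideanSpace ℝ (Fin n) → ℝ) (hu : ConvexOn ℝ Set.univ u)
    (C : ℝ) (hdom : ∀ x, suppFn P x - C ≤ u x ∧ u x ≤ suppFn P x + C) :
    LipschitzWith (Real.toNNReal (sSup ((fun p => ‖p‖) '' P))) u := by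
  set M : ℝ := sSup ((fun p => ‖p‖) '' P) with hMdef
  have hbdd : BddAbove ((fun p => ‖p‖) '' P) := (hP.image continuous_norm).bddAbove
  have hM : ∀ p ∈ P, ‖p‖ ≤ M := fun p hp => le_csSup hbdd ⟨p, hp, rfl⟩
  have hM0 : 0 ≤ M := hne.elim fun p hp => (norm_nonneg p).trans (hM p hp)
  -- inner product bound
  have hinner : ∀ (v : EuclideanSpace ℝ (Fin n)), ∀ p ∈ P, (⟪v, p⟫ : ℝ) ≤ M * ‖v‖ := by
    intro v p hp
    calc (⟪v, p⟫ : ℝ) ≤ ‖v‖ * ‖p‖ := real_inner_le_norm v p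
      _ ≤ ‖v‖ * M := by
          exact mul_le_mul_of_nonneg_left (hM p hp) (norm_nonneg v)
      _ = M * ‖v‖ := mul_comm _ _
  -- key inequality
  have key : ∀ x y : EuclideanSpace ℝ (Fin n), u y - u x ≤ M * ‖y - x‖ := by
    intro x y
    refine le_of_forall_pos_le_add ?_
    intro ε hε
    set t : ℝ := max 1 (2 * C / ε) with htdef
    have ht1 : (1 : ℝ) ≤ t := le_max_left _ _
    have ht0 : (0 : ℝ) < t := lt_of_lt_of_le one_pos ht1
    have htC : 2 * C ≤ t * ε := by
      have : 2 * C / ε ≤ t := le_max_right _ _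
      calc 2 * C = (2 * C / ε) * ε := by field_simp
        _ ≤ t * ε := mul_le_mul_of_nonneg_right this hε.le
    set z : EuclideanSpace ℝ (Fin n) := x + t • (y - x) with hzdef
    -- support function bound at z
    have hφz : suppFn P z ≤ suppFn P x + t * (M * ‖y - x‖) := by
      apply csSup_le (hne.image _)
      rintro _ ⟨p, hp, rfl⟩
      have h1 : (⟪x, p⟫ : ℝ) ≤ suppFn P x :=
        le_csSup (hP.image (Continuous.inner continuous_const continuous_id)).bddAbove
          ⟨p, hp, rfl⟩
      have h2 : (⟪y - x, p⟫ : ℝ) ≤ M * ‖y - x‖ := hinner _ p hp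
      show (⟪z, p⟫ : ℝ) ≤ _
      have hz : (⟪z, p⟫ : ℝ) = ⟪x, p⟫ + t * ⟪y - x, p⟫ := by
        rw [hzdef, inner_add_left, real_inner_smul_left]
      rw [hz]
      have := mul_le_mul_of_nonneg_left h2 ht0.le
      linarith
    -- u z bound
    have huz : u z ≤ u x + 2 * C + t * (M * ‖y - x‖) := by
      have h1 := (hdom z).2
      have h2 := (hdom x).1
      linarith
    -- convexity: y = (1 - 1/t) x + (1/t) z
    have hy : y = (1 - 1/t) • x + (1/t) • z := by
      rw [hzdef, smul_add, smul_smul]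
      rw [div_mul_cancel₀ _ ht0.ne']
      module
    have ha : (0:ℝ) ≤ 1 - 1/t := by
      have : 1/t ≤ 1 := by rw [div_le_one ht0]; exact ht1
      linarith
    have hb : (0:ℝ) ≤ 1/t := by positivity
    have hab : (1 - 1/t) + 1/t = 1 := by ring
    have hconv := hu.2 (Set.mem_univ x) (Set.mem_univ z) ha hb hab
    rw [← hy] at hconv
    have : u y ≤ (1 - 1/t) * u x + (1/t) * u z := hconv
    have hfin : u y - u x ≤ (1/t) * (u z - u x) := by linarith [this]
    have : (1/t) * (u z - u x) ≤ (1/t) * (2 * C + t * (M * ‖y - x‖)) := by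
      apply mul_le_mul_of_nonneg_left _ (by positivity)
      linarith
    have heq : (1/t) * (2 * C + t * (M * ‖y - x‖)) = 2 * C / t + M * ‖y - x‖ := by
      field_simp
    have h2Ct : 2 * C / t ≤ ε := by
      rw [div_le_iff₀ ht0]
      calc 2 * C ≤ t * ε := htC
        _ = ε * t := mul_comm _ _
    linarith
  -- conclude Lipschitz
  apply LipschitzWith.of_dist_le_mul
  intro x y
  rw [Real.coe_toNNReal _ hM0, Real.dist_eq, dist_eq_norm]
  have h1 := key x y
  have h2 := key y x
  rw [show ‖y - x‖ = ‖x - y‖ from norm_sub_rev y x] at h1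
  exact abs_sub_le_iff.mpr ⟨h2, h1⟩
end
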